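/- For every real number p ≥ 1 and all u, v ∈ ℝⁿ, ‖iₚ(u) − iₚ(v)‖ ≤ ((p+1) · 2^{p−2})^{1/p} · ‖u − v‖^{1/p}, i.e., the map iₚ is Hölder continuous with exponent 1/p and constant ((p+1) 2^{p−2})^{1/p}. -/

import Mathlib

/-!
`iₚ` inverts the duality map `jₚ(x) = ‖x‖^(p-1) x`, which is strongly monotone:
`‖x - y‖^(p+1) ≤ 2^(p-1) ⟪jₚ x - jₚ y, x - y⟫`. Taking `x = iₚ u`, `y = iₚ v` and applying
Cauchy–Schwarz gives `‖iₚ u - iₚ v‖^p ≤ 2^(p-1) ‖u - v‖`, and `2^(p-1) ≤ (p+1) 2^(p-2)`.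

By polarisation, strong monotonicity is a scalar inequality in `A = ‖x‖ ≥ B = ‖y‖` and
`D = ‖x - y‖ ≤ A + B`. Its right-hand side is affine in `D²`, and `D^(p+1) ≤ (A+B)^(p-1) D²`
is linear in `D²`, so only the endpoints `D = 0` and `D = A + B` need checking; the latter is
the power mean inequality `(A+B)^p ≤ 2^(p-1) (A^p + B^p)`.
-/

open scoped InnerProductSpace
open Classical

/-- The map `iₚ(x) = x / ‖x‖^(1 - 1/p)` for `x ≠ 0`, and `iₚ(0) = 0`. -/
noncomputable def ip {n : ℕ} (p : ℝ) (x : EuclideanSpace ℝ (Fin n)) :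
    EuclideanSpace ℝ (Fin n) :=
  if x = 0 then 0 else (‖x‖ ^ (1 - 1 / p))⁻¹ • x

open Real

lemma two_rpow_sub_one_eq (p : ℝ) : (2 : ℝ) ^ (p - 1) = 2 ^ (p - 2) * 2 := by
  rw [← rpow_add_one two_ne_zero]; ring_nf

lemma rpow_add_one_le_two_rpow_sub_two_mul {A B D p : ℝ} (hp : 1 ≤ p) (hB : 0 ≤ B)
    (hBA : B ≤ A) (hD : 0 ≤ D) (hDS : D ≤ A + B) :
    D ^ (p + 1) ≤ 2 ^ (p - 2) *
      ((A ^ (p - 1) - B ^ (p - 1)) * (A ^ 2 - B ^ 2) + (A ^ (p - 1) + B ^ (p - 1)) * D ^ 2) := by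
  have hA : 0 ≤ A := hB.trans hBA
  set S := A + B
  have hS : 0 ≤ S := add_nonneg hA hB
  have hsplit : ∀ {x : ℝ}, 0 ≤ x → x ^ (p + 1) = x ^ (p - 1) * x ^ 2 := fun hx => by
    rw [← rpow_two, ← rpow_add' hx (by linarith)]; ring_nf
  have hpow_succ : ∀ {x : ℝ}, 0 ≤ x → x ^ (p - 1) * x = x ^ p := fun hx => by
    rw [← rpow_add_one' hx (by linarith)]; ring_nf
  have hcross : 0 ≤ (A ^ (p - 1) - B ^ (p - 1)) * (A ^ 2 - B ^ 2) :=
    mul_nonneg (sub_nonneg.2 (rpow_le_rpow hB hBA (by linarith)))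
      (sub_nonneg.2 (pow_le_pow_left₀ hB hBA 2))
  have hpower_mean : S ^ p ≤ 2 ^ (p - 1) * (A ^ p + B ^ p) := by
    exact_mod_cast NNReal.rpow_add_le_mul_rpow_add_rpow ⟨A, hA⟩ ⟨B, hB⟩ hp
  have hendpoint : S ^ (p - 1) * S ^ 2 ≤ 2 ^ (p - 2) *
      ((A ^ (p - 1) - B ^ (p - 1)) * (A ^ 2 - B ^ 2) + (A ^ (p - 1) + B ^ (p - 1)) * S ^ 2) :=
    calc S ^ (p - 1) * S ^ 2 = S ^ p * S := by rw [← hsplit hS, rpow_add_one' hS (by linarith)]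
      _ ≤ 2 ^ (p - 1) * (A ^ p + B ^ p) * S := by gcongr
      _ = _ := by
        rw [two_rpow_sub_one_eq, ← hpow_succ hA, ← hpow_succ hB]; ring
  have hDpow : D ^ (p + 1) ≤ S ^ (p - 1) * D ^ 2 := by
    rw [hsplit hD]; gcongr
  have hD2 : D ^ 2 ≤ S ^ 2 := pow_le_pow_left₀ hD hDS 2
  have h2pos : (0 : ℝ) < 2 ^ (p - 2) := by positivity
  rcases le_total (S ^ (p - 1)) (2 ^ (p - 2) * (A ^ (p - 1) + B ^ (p - 1))) with hslope | hslope
  · nlinarith [mul_le_mul_of_nonneg_right hslope (sq_nonneg D)]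
  · nlinarith [mul_le_mul_of_nonneg_left hD2 (sub_nonneg.2 hslope)]

section DualityMap

variable {E : Type*} [NormedAddCommGroup E] [InnerProductSpace ℝ E]

noncomputable def jp (p : ℝ) (x : E) : E := ‖x‖ ^ (p - 1) • x

lemma two_mul_inner_jp_sub_jp (p : ℝ) (x y : E) :
    2 * ⟪jp p x - jp p y, x - y⟫_ℝ =
      (‖x‖ ^ (p - 1) - ‖y‖ ^ (p - 1)) * (‖x‖ ^ 2 - ‖y‖ ^ 2)
        + (‖x‖ ^ (p - 1) + ‖y‖ ^ (p - 1)) * ‖x - y‖ ^ 2 := by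
  rw [norm_sub_sq_real, jp, jp]
  simp only [inner_sub_left, inner_sub_right, real_inner_smul_left, real_inner_self_eq_norm_sq,
    real_inner_comm x y]
  ring

lemma norm_sub_rpow_le_inner_jp_sub_jp {p : ℝ} (hp : 1 ≤ p) (x y : E) :
    ‖x - y‖ ^ (p + 1) ≤ 2 ^ (p - 1) * ⟪jp p x - jp p y, x - y⟫_ℝ := by
  wlog h : ‖y‖ ≤ ‖x‖ generalizing x y
  · have hyx := this y x (le_of_not_ge h)
    rwa [norm_sub_rev, ← neg_sub x y, ← neg_sub (jp p x) (jp p y), inner_neg_neg] at hyx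
  rw [two_rpow_sub_one_eq, mul_assoc, two_mul_inner_jp_sub_jp]
  exact rpow_add_one_le_two_rpow_sub_two_mul hp (norm_nonneg y) h (norm_nonneg _)
    (norm_sub_le x y)

end DualityMap

lemma jp_ip {n : ℕ} {p : ℝ} (hp : 0 < p) (u : EuclideanSpace ℝ (Fin n)) : jp p (ip p u) = u := by
  by_cases hu : u = 0
  · simp [jp, ip, hu]
  have hnu : 0 < ‖u‖ := norm_pos_iff.mpr hu
  have hinv : (‖u‖ ^ (1 - 1 / p))⁻¹ = ‖u‖ ^ (1 / p - 1) := by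
    rw [← rpow_neg hnu.le]; ring_nf
  have hnorm : ‖(‖u‖ ^ (1 / p - 1)) • u‖ = ‖u‖ ^ (1 / p) := by
    rw [norm_smul, norm_of_nonneg (by positivity), ← rpow_add_one hnu.ne']; ring_nf
  rw [jp, ip, if_neg hu, hinv, hnorm, smul_smul, ← rpow_mul hnu.le, ← rpow_add hnu]
  rw [show 1 / p * (p - 1) + (1 / p - 1) = 0 by field_simp; ring, rpow_zero, one_smul]

lemma norm_sub_ip_rpow_le {n : ℕ} {p : ℝ} (hp : 1 ≤ p) (u v : EuclideanSpace ℝ (Fin n)) :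
    ‖ip p u - ip p v‖ ^ p ≤ 2 ^ (p - 1) * ‖u - v‖ := by
  have hmono := norm_sub_rpow_le_inner_jp_sub_jp hp (ip p u) (ip p v)
  rw [jp_ip (by linarith), jp_ip (by linarith)] at hmono
  rcases (norm_nonneg (ip p u - ip p v)).eq_or_lt with hD | hD
  · rw [← hD, zero_rpow (by linarith)]; positivity
  set D := ‖ip p u - ip p v‖
  have : D ^ p * D ≤ 2 ^ (p - 1) * ‖u - v‖ * D :=
    calc D ^ p * D = D ^ (p + 1) := (rpow_add_one hD.ne' p).symm
      _ ≤ 2 ^ (p - 1) * ⟪u - v, ip p u - ip p v⟫_ℝ := hmono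
      _ ≤ 2 ^ (p - 1) * ‖u - v‖ * D := by
        rw [mul_assoc]; gcongr; exact real_inner_le_norm _ _
  exact le_of_mul_le_mul_right this hD

theorem ip_holder_continuous {n : ℕ}
    (p : ℝ) (hp : 1 ≤ p) (u v : EuclideanSpace ℝ (Fin n)) :
    ‖ip p u - ip p v‖ ≤ ((p + 1) * 2 ^ (p - 2)) ^ (1 / p) * ‖u - v‖ ^ (1 / p) := by
  have hp0 : 0 < p := by linarith
  have hconst : (2 : ℝ) ^ (p - 1) ≤ (p + 1) * 2 ^ (p - 2) := by
    rw [two_rpow_sub_one_eq, mul_comm]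
    gcongr; linarith
  rw [← mul_rpow (by positivity) (norm_nonneg _), one_div,
    le_rpow_inv_iff_of_pos (norm_nonneg _) (by positivity) hp0]
  calc ‖ip p u - ip p v‖ ^ p ≤ 2 ^ (p - 1) * ‖u - v‖ := norm_sub_ip_rpow_le hp u v
    _ ≤ (p + 1) * 2 ^ (p - 2) * ‖u - v‖ := by gcongr
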